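/- arXiv:1202.5741 — 2 statements merged into one kernel-verified Lean document; each statement's English description precedes it below -/
import Mathlib

section
/- Let n ≥ 2, N = n² − n + 1, q = e^{2πi/N}, and let α_1, …, α_n be distinct integers in {0, …, N−1} forming an (N, n, 1)-difference set modulo N. Define in ℂⁿ the vector φ = (1/√n)·(1, …, 1), the diagonal unitary U = diag(q^{α_1}, …, q^{α_n}), and the rank-one projections P_k = |U^k φ⟩⟨U^k φ| for 1 ≤ k ≤ N. Then ∑_{k=1}^N P_k = (N/n)·I. -/
open Finset Matrix

/-- `D` is an `(N, n, lam)`-difference set in `ZMod N`. -/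
def IsDifferenceSet (N n lam : ℕ) (D : Finset (ZMod N)) : Prop :=
  D.card = n ∧ ∀ g : ZMod N, g ≠ 0 →
    ((D ×ˢ D).filter (fun p => p.1 ≠ p.2 ∧ p.1 - p.2 = g)).card = lam

theorem conditional_sic_sum_eq
    (n N : ℕ) (hn : 2 ≤ n) (hN : N = n ^ 2 - n + 1)
    (q : ℂ) (hq : q = Complex.exp (2 * Real.pi * Complex.I / N))
    (α : Fin n → ℕ) (hlt : ∀ i, α i ≤ N - 1)
    (hinj : Function.Injective (fun i => ((α i : ZMod N))))
    (hD : IsDifferenceSet N n 1 (Finset.univ.image (fun i => ((α i : ZMod N)))))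
    (φ : Fin n → ℂ) (hφ : φ = fun _ => (((Real.sqrt n)⁻¹ : ℝ) : ℂ))
    (U : Matrix (Fin n) (Fin n) ℂ) (hU : U = Matrix.diagonal (fun i => q ^ α i))
    (P : ℕ → Matrix (Fin n) (Fin n) ℂ)
    (hP : ∀ k, P k = Matrix.vecMulVec ((U ^ k) *ᵥ φ) (fun b => starRingEnd ℂ (((U ^ k) *ᵥ φ) b))) :
    ∑ k ∈ Finset.Icc 1 N, P k = ((N : ℂ) / n) • (1 : Matrix (Fin n) (Fin n) ℂ) := by
  have hn0 : (0 : ℕ) < n := by omega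
  have hN0 : N ≠ 0 := by subst hN; exact Nat.succ_ne_zero _
  have hprim : IsPrimitiveRoot q N := hq ▸ Complex.isPrimitiveRoot_exp N hN0
  have hqN : q ^ N = 1 := hprim.pow_eq_one
  have hq0 : q ≠ 0 := by
    intro h
    rw [h, zero_pow hN0] at hqN
    exact zero_ne_one hqN
  have hnorm : ‖q‖ = 1 := Complex.norm_eq_one_of_pow_eq_one hqN hN0
  have hconj : starRingEnd ℂ q = q⁻¹ := (Complex.inv_eq_conj hnorm).symm
  set c : ℂ := (((Real.sqrt n)⁻¹ : ℝ) : ℂ) with hc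
  have hcc : c * c = (n : ℂ)⁻¹ := by
    rw [hc, ← Complex.ofReal_mul, ← Real.sqrt_inv, Real.mul_self_sqrt (by positivity)]
    push_cast
    simp
  have hv : ∀ (k : ℕ) (i : Fin n), ((U ^ k) *ᵥ φ) i = (q ^ α i) ^ k * c := by
    intro k i
    subst hU hφ
    rw [Matrix.diagonal_pow, Matrix.mulVec_diagonal]
    rfl
  ext i j
  rw [Matrix.sum_apply]
  have hterm : ∀ k : ℕ, P k i j = (c * c) * (q ^ α i * (q ^ α j)⁻¹) ^ k := by
    intro k
    rw [hP k, Matrix.vecMulVec_apply, hv, hv]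
    have hcconj : (starRingEnd ℂ) c = c := by rw [hc]; exact Complex.conj_ofReal _
    simp only [_root_.map_mul, map_pow, hconj, hcconj]
    rw [mul_pow, inv_pow, inv_pow]
    ring
  simp only [hterm]
  rw [← Finset.mul_sum]
  set r : ℂ := q ^ α i * (q ^ α j)⁻¹ with hr
  have hb0 : (q : ℂ) ^ α j ≠ 0 := pow_ne_zero _ hq0
  by_cases hij : i = j
  · subst hij
    have hr1 : r = 1 := by rw [hr, mul_inv_cancel₀ hb0]
    simp [hr1, hcc, Matrix.one_apply, div_eq_mul_inv, mul_comm]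
  · -- r ≠ 1 and r ^ N = 1, so the geometric sum vanishes
    have hαi : α i < N := lt_of_le_of_lt (hlt i) (Nat.pred_lt hN0)
    have hαj : α j < N := lt_of_le_of_lt (hlt j) (Nat.pred_lt hN0)
    have hr1 : r ≠ 1 := by
      intro h
      rw [hr, mul_inv_eq_one₀ hb0] at h
      have h' := hprim.pow_inj hαi hαj h
      exact hij (hinj (by simp [h']))
    have hrN : r ^ N = 1 := by
      rw [hr, mul_pow, inv_pow, ← pow_mul, ← pow_mul, mul_comm (α i) N, mul_comm (α j) N,
        pow_mul, pow_mul, hqN, one_pow, one_pow, inv_one, mul_one]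
    have hins : Finset.range (N + 1) = insert 0 (Finset.Icc 1 N) := by
      ext k; simp; omega
    have h0 : (0 : ℕ) ∉ Finset.Icc 1 N := by simp
    have hsum : ∑ k ∈ Finset.Icc 1 N, r ^ k = 0 := by
      have := geom_sum_eq hr1 (N + 1)
      rw [hins, Finset.sum_insert h0, pow_succ, hrN, one_mul] at this
      have h2 : (r - 1) / (r - 1) = 1 := div_self (sub_ne_zero.mpr hr1)
      rw [h2, pow_zero] at this
      linear_combination this
    rw [hsum, mul_zero]
    simp [Matrix.one_apply_ne hij]
end

section
/- Let n ≥ 2, N = n² − n + 1, q = e^{2πi/N}, and let α_1, …, α_n form an (N, n, 1)-difference set modulo N. With φ = (1/√n)·(1, …, 1), U = diag(q^{α_1}, …, q^{α_n}), and P_k = |U^k φ⟩⟨U^k φ|, one has Tr(P_i P_j) = (n−1)/n² for all i ≠ j with 1 ≤ i, j ≤ N. -/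
open Finset Matrix

theorem conditional_sic_equiangular
    (n N : ℕ) (hn : 2 ≤ n) (hN : N = n ^ 2 - n + 1)
    (q : ℂ) (hq : q = Complex.exp (2 * Real.pi * Complex.I / N))
    (α : Fin n → ℕ) (hlt : ∀ i, α i ≤ N - 1)
    (hinj : Function.Injective (fun i => ((α i : ZMod N))))
    (hD : IsDifferenceSet N n 1 (Finset.univ.image (fun i => ((α i : ZMod N)))))
    (φ : Fin n → ℂ) (hφ : φ = fun _ => (((Real.sqrt n)⁻¹ : ℝ) : ℂ))
    (U : Matrix (Fin n) (Fin n) ℂ) (hU : U = Matrix.diagonal (fun i => q ^ α i))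
    (P : ℕ → Matrix (Fin n) (Fin n) ℂ)
    (hP : ∀ k, P k = Matrix.vecMulVec ((U ^ k) *ᵥ φ) (fun b => starRingEnd ℂ (((U ^ k) *ᵥ φ) b))) :
    ∀ i ∈ Finset.Icc 1 N, ∀ j ∈ Finset.Icc 1 N, i ≠ j →
      (P i * P j).trace = ((n : ℂ) - 1) / (n : ℂ) ^ 2 := by
  classical
  intro i hi j hj hij
  simp only [Finset.mem_Icc] at hi hj
  have hn0 : 0 < n := by omega
  have hN1 : 1 < N := by
    have : n ≤ n ^ 2 := Nat.le_self_pow (by norm_num) n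
    omega
  haveI : NeZero N := ⟨by omega⟩
  have hprim : IsPrimitiveRoot q N := by
    rw [hq]; exact Complex.isPrimitiveRoot_exp N (by omega)
  have hq1 : q ^ N = 1 := hprim.pow_eq_one
  set χ : AddChar (ZMod N) ℂ := AddChar.zmodChar N hq1 with hχ
  have hqpow : ∀ m : ℕ, q ^ m = χ ((m : ZMod N)) := fun m =>
    (AddChar.zmodChar_apply' hq1 m).symm
  have hconjq : starRingEnd ℂ q = q⁻¹ := by
    rw [hq, ← Complex.exp_conj, ← Complex.exp_neg]
    congr 1
    simp only [map_div₀, _root_.map_mul, Complex.conj_I, Complex.conj_ofReal, map_ofNat,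
      map_natCast]
    ring
  have hconjχ : ∀ x : ZMod N, starRingEnd ℂ (χ x) = χ (-x) := by
    intro x
    rw [AddChar.map_neg_eq_inv, hχ, AddChar.zmodChar_apply, map_pow, hconjq, inv_pow]
  set c : ℂ := (((Real.sqrt n)⁻¹ : ℝ) : ℂ) with hc
  have hv : ∀ (k : ℕ) (a : Fin n),
      ((U ^ k) *ᵥ φ) a = χ (((α a * k : ℕ) : ZMod N)) * c := by
    intro k a
    rw [hU, hφ, Matrix.diagonal_pow, Matrix.mulVec_diagonal, Pi.pow_apply, ← pow_mul, hqpow]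
  have hcc : c * c = (n : ℂ)⁻¹ := by
    rw [hc, ← Complex.ofReal_mul, ← mul_inv, Real.mul_self_sqrt (by positivity)]
    push_cast
    rfl
  set az : Fin n → ZMod N := fun a => ((α a : ZMod N)) with haz
  set r : ZMod N := (j : ZMod N) - (i : ZMod N) with hr
  have hr0 : r ≠ 0 := by
    intro h
    rw [hr, sub_eq_zero] at h
    have h2 : j % N = i % N := (ZMod.natCast_eq_natCast_iff _ _ _).mp h
    rcases eq_or_lt_of_le hj.2 with hjN | hjN
    · rcases eq_or_lt_of_le hi.2 with hiN | hiN
      · exact hij (by omega)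
      · rw [hjN, Nat.mod_self, Nat.mod_eq_of_lt hiN] at h2; omega
    · rcases eq_or_lt_of_le hi.2 with hiN | hiN
      · rw [hiN, Nat.mod_self, Nat.mod_eq_of_lt hjN] at h2; omega
      · rw [Nat.mod_eq_of_lt hjN, Nat.mod_eq_of_lt hiN] at h2; exact hij h2.symm
  -- per-term computation
  have hterm : ∀ a b : Fin n,
      (P i) a b * (P j) b a = (n : ℂ)⁻¹ * (n : ℂ)⁻¹ * χ ((az b - az a) * r) := by
    intro a b
    have hcconj : starRingEnd ℂ c = c := by rw [hc]; exact Complex.conj_ofReal _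
    simp only [hP, Matrix.vecMulVec_apply, hv, _root_.map_mul, hcconj, hconjχ]
    have e1 : χ ((α a * i : ℕ) : ZMod N) * χ (-((α b * i : ℕ) : ZMod N)) *
        χ ((α b * j : ℕ) : ZMod N) * χ (-((α a * j : ℕ) : ZMod N))
        = χ ((az b - az a) * r) := by
      rw [← χ.map_add_eq_mul, ← χ.map_add_eq_mul, ← χ.map_add_eq_mul]
      congr 1
      rw [haz, hr]
      push_cast
      ring
    calc χ ((α a * i : ℕ) : ZMod N) * c * (χ (-((α b * i : ℕ) : ZMod N)) * c) *
          (χ ((α b * j : ℕ) : ZMod N) * c * (χ (-((α a * j : ℕ) : ZMod N)) * c))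
        = (c * c) * (c * c) * (χ ((α a * i : ℕ) : ZMod N) * χ (-((α b * i : ℕ) : ZMod N)) *
            χ ((α b * j : ℕ) : ZMod N) * χ (-((α a * j : ℕ) : ZMod N))) := by ring
      _ = (n : ℂ)⁻¹ * (n : ℂ)⁻¹ * χ ((az b - az a) * r) := by rw [e1, hcc]
  -- the main character sum
  have main : ∑ a : Fin n, ∑ b : Fin n, χ ((az b - az a) * r) = (n : ℂ) - 1 := by
    rw [← Finset.sum_product']
    rw [show ((univ : Finset (Fin n)) ×ˢ (univ : Finset (Fin n)))
        = (univ : Finset (Fin n)).diag ∪ (univ : Finset (Fin n)).offDiag from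
      (Finset.diag_union_offDiag _).symm]
    rw [Finset.sum_union (Finset.disjoint_diag_offDiag _)]
    have hdiag : ∑ p ∈ (univ : Finset (Fin n)).diag, χ ((az p.2 - az p.1) * r) = (n : ℂ) := by
      rw [Finset.sum_diag]
      simp [Finset.card_univ]
    have hoff : ∑ p ∈ (univ : Finset (Fin n)).offDiag, χ ((az p.2 - az p.1) * r) = -1 := by
      set D : Finset (ZMod N) := Finset.univ.image (fun i => ((α i : ZMod N))) with hDdef
      have hbij : ∑ p ∈ (univ : Finset (Fin n)).offDiag, χ ((az p.2 - az p.1) * r)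
          = ∑ p ∈ (D ×ˢ D).filter (fun p => p.1 ≠ p.2), χ ((p.1 - p.2) * r) := by
        apply Finset.sum_bij (fun p _ => (az p.2, az p.1))
        · intro p hp
          simp only [Finset.mem_offDiag] at hp
          simp only [Finset.mem_filter, Finset.mem_product]
          refine ⟨⟨Finset.mem_image_of_mem _ (Finset.mem_univ _),
            Finset.mem_image_of_mem _ (Finset.mem_univ _)⟩, ?_⟩
          exact fun h => hp.2.2 (hinj h).symm
        · intro p hp p' hp' h
          simp only [Prod.mk.injEq] at h
          exact Prod.ext (hinj h.2) (hinj h.1)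
        · intro p hp
          simp only [Finset.mem_filter, Finset.mem_product, hDdef, Finset.mem_image] at hp
          obtain ⟨⟨⟨b, _, hb⟩, ⟨a, _, ha⟩⟩, hne⟩ := hp
          refine ⟨(a, b), ?_, ?_⟩
          · simp only [Finset.mem_offDiag]
            refine ⟨Finset.mem_univ _, Finset.mem_univ _, ?_⟩
            rintro rfl
            exact hne (by rw [← hb, ← ha])
          · exact Prod.ext hb ha
        · intro p hp
          rfl
      rw [hbij]
      have hfib : ∑ p ∈ (D ×ˢ D).filter (fun p => p.1 ≠ p.2), χ ((p.1 - p.2) * r)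
          = ∑ g ∈ (univ : Finset (ZMod N)).erase 0,
              ∑ p ∈ ((D ×ˢ D).filter (fun p => p.1 ≠ p.2)).filter
                (fun p => p.1 - p.2 = g), χ ((p.1 - p.2) * r) := by
        refine (Finset.sum_fiberwise_of_maps_to ?_ _).symm
        intro p hp
        simp only [Finset.mem_filter] at hp
        exact Finset.mem_erase.mpr ⟨sub_ne_zero.mpr hp.2, Finset.mem_univ _⟩
      rw [hfib]
      have hinner : ∀ g ∈ (univ : Finset (ZMod N)).erase 0,
          ∑ p ∈ ((D ×ˢ D).filter (fun p => p.1 ≠ p.2)).filter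
            (fun p => p.1 - p.2 = g), χ ((p.1 - p.2) * r) = χ (g * r) := by
        intro g hg
        have hg0 : g ≠ 0 := (Finset.mem_erase.mp hg).1
        have hcard := hD.2 g hg0
        rw [Finset.filter_filter]
        have hcong : ∀ p ∈ (D ×ˢ D).filter (fun p => p.1 ≠ p.2 ∧ p.1 - p.2 = g),
            χ ((p.1 - p.2) * r) = χ (g * r) := by
          intro p hp
          simp only [Finset.mem_filter] at hp
          rw [hp.2.2]
        rw [Finset.sum_congr rfl hcong, Finset.sum_const, hcard, one_smul]
      rw [Finset.sum_congr rfl hinner]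
      have hsum0 : ∑ g : ZMod N, χ (g * r) = 0 := by
        have hne : (χ.mulShift r) ≠ 0 := by
          rw [AddChar.ne_zero_iff]
          have hp1 := AddChar.zmodChar_primitive_of_primitive_root N hprim hr0
          rw [AddChar.ne_one_iff] at hp1
          exact hp1
        have h0 := AddChar.sum_eq_zero_iff_ne_zero.mpr hne
        rw [← h0]
        apply Finset.sum_congr rfl
        intro g _
        rw [AddChar.mulShift_apply, mul_comm]
      have hsplit : χ ((0 : ZMod N) * r) + ∑ g ∈ (univ : Finset (ZMod N)).erase 0, χ (g * r)
          = ∑ g : ZMod N, χ (g * r) :=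
        Finset.add_sum_erase (univ : Finset (ZMod N)) (fun g => χ (g * r)) (Finset.mem_univ 0)
      rw [hsum0, zero_mul, AddChar.map_zero_eq_one] at hsplit
      linear_combination hsplit
    rw [hdiag, hoff]
    ring
  -- assemble
  have htr : (P i * P j).trace = ∑ a : Fin n, ∑ b : Fin n, (P i) a b * (P j) b a := by
    simp [Matrix.trace, Matrix.diag, Matrix.mul_apply]
  rw [htr]
  simp only [hterm]
  have hnne : (n : ℂ) ≠ 0 := Nat.cast_ne_zero.mpr (by omega)
  rw [show (∑ a : Fin n, ∑ b : Fin n, (n:ℂ)⁻¹ * (n:ℂ)⁻¹ * χ ((az b - az a) * r))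
      = (n:ℂ)⁻¹ * (n:ℂ)⁻¹ * ∑ a : Fin n, ∑ b : Fin n, χ ((az b - az a) * r) from by
    rw [Finset.mul_sum]
    exact Finset.sum_congr rfl fun a _ => (Finset.mul_sum _ _ _).symm]
  rw [main, eq_div_iff (pow_ne_zero 2 hnne), pow_two]
  field_simp
end
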